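/- arXiv:2002.03762 — 2 statements merged into one kernel-verified Lean document; each statement's English description precedes it below -/
import Mathlib

section
/- If A⇒B ≡ C₁∧C₂, then there exist B₁, B₂ with B ≡ B₁∧B₂, C₁ ≡ A⇒B₁, and C₂ ≡ A⇒B₂. -/
/-- Types: A ::= τ | A ⇒ A | A ∧ A -/
inductive Ty : Type
  | tau : Ty
  | imp : Ty → Ty → Ty
  | conj : Ty → Ty → Ty
  deriving DecidableEq

/-- Type equivalence ≡: smallest congruence with the four isomorphisms. -/
inductive TyEq : Ty → Ty → Prop
  | refl (A) : TyEq A A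
  | symm {A B} : TyEq A B → TyEq B A
  | trans {A B C} : TyEq A B → TyEq B C → TyEq A C
  | impCongr {A A' B B'} : TyEq A A' → TyEq B B' → TyEq (.imp A B) (.imp A' B')
  | conjCongr {A A' B B'} : TyEq A A' → TyEq B B' → TyEq (.conj A B) (.conj A' B')
  | comm (A B) : TyEq (.conj A B) (.conj B A)
  | assoc (A B C) : TyEq (.conj A (.conj B C)) (.conj (.conj A B) C)
  | dist (A B C) : TyEq (.imp A (.conj B C)) (.conj (.imp A B) (.imp A C))
  | curry (A B C) : TyEq (.imp (.conj A B) C) (.imp A (.imp B C))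

/-- Add premise `a` to a prime factor: τ becomes a⇒τ (convention a∧∅ = a),
    c⇒τ becomes (a∧c)⇒τ. -/
def addPrem (a : Ty) : Ty → Ty
  | .tau => .imp a .tau
  | .imp c .tau => .imp (.conj a c) .tau
  | t => t

/-- Multiset of prime factors. -/
def PF : Ty → Multiset Ty
  | .tau => {.tau}
  | .imp a b => (PF b).map (addPrem a)
  | .conj a b => PF a + PF b
instance : IsTrans Ty TyEq := ⟨fun _ _ _ => TyEq.trans⟩

/-- prime factors are τ or c⇒τ -/
def Prime' (p : Ty) : Prop := p = .tau ∨ ∃ c, p = .imp c .tau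

lemma addPrem_prime {p : Ty} (h : Prime' p) (a : Ty) : Prime' (addPrem a p) := by
  rcases h with rfl | ⟨c, rfl⟩
  · exact Or.inr ⟨a, rfl⟩
  · exact Or.inr ⟨.conj a c, rfl⟩

lemma PF_prime : ∀ X : Ty, ∀ p ∈ PF X, Prime' p
  | .tau, p, hp => by
      simp only [PF, Multiset.mem_singleton] at hp; exact Or.inl hp
  | .imp a b, p, hp => by
      simp only [PF, Multiset.mem_map] at hp
      obtain ⟨q, hq, rfl⟩ := hp
      exact addPrem_prime (PF_prime b q hq) a
  | .conj a b, p, hp => by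
      simp only [PF, Multiset.mem_add] at hp
      rcases hp with hp | hp
      · exact PF_prime a p hp
      · exact PF_prime b p hp

lemma PF_ne : ∀ X : Ty, PF X ≠ 0
  | .tau => by simp [PF]
  | .imp a b => by simp [PF, PF_ne b]
  | .conj a b => by simp [PF, PF_ne a]

lemma addPrem_eq {p : Ty} (h : Prime' p) (a : Ty) : TyEq (addPrem a p) (.imp a p) := by
  rcases h with rfl | ⟨c, rfl⟩
  · exact .refl _
  · exact .curry a c .tau

/-- fold a list of types into a conjunction -/
def cL : List Ty → Ty
  | [] => .tau
  | [a] => a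
  | a :: b :: l => .conj a (cL (b :: l))

lemma cL_cons (a : Ty) {l : List Ty} (h : l ≠ []) : cL (a :: l) = .conj a (cL l) := by
  cases l with
  | nil => exact absurd rfl h
  | cons b l => rfl

lemma cL_perm {l₁ l₂ : List Ty} (h : l₁.Perm l₂) : TyEq (cL l₁) (cL l₂) := by
  induction h with
  | nil => exact .refl _
  | @cons x l₁ l₂ h ih =>
    cases l₁ with
    | nil => rw [h.nil_eq.symm]; exact .refl _
    | cons y l =>
      have h₂ : l₂ ≠ [] := by intro hh; subst hh; exact absurd h.eq_nil (by simp)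
      rw [cL_cons _ (by simp), cL_cons _ h₂]
      exact .conjCongr (.refl _) ih
  | @swap x y l =>
    cases l with
    | nil => exact .comm y x
    | cons z l =>
      rw [cL_cons y (l := x :: z :: l) (by simp), cL_cons x (l := z :: l) (by simp),
        cL_cons x (l := y :: z :: l) (by simp), cL_cons y (l := z :: l) (by simp)]
      exact .trans (.assoc y x (cL (z :: l)))
        (.trans (.conjCongr (.comm y x) (.refl _)) (.symm (.assoc x y (cL (z :: l)))))
  | trans _ _ ih₁ ih₂ => exact ih₁.trans ih₂

lemma cL_forall₂ {l₁ l₂ : List Ty} (h : List.Forall₂ TyEq l₁ l₂) :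
    TyEq (cL l₁) (cL l₂) := by
  induction h with
  | nil => exact .refl _
  | @cons a b l m hab h ih =>
    cases h with
    | nil => exact hab
    | @cons x y lx ly h' h'' =>
      rw [cL_cons a (l := x :: lx) (by simp), cL_cons b (l := y :: ly) (by simp)]
      exact .conjCongr hab ih

lemma cL_append : ∀ {l₁ l₂ : List Ty}, l₁ ≠ [] → l₂ ≠ [] →
    TyEq (cL (l₁ ++ l₂)) (.conj (cL l₁) (cL l₂))
  | [], _, h₁, _ => absurd rfl h₁
  | [a], l₂, _, h₂ => by rw [List.singleton_append, cL_cons _ h₂]; exact .refl _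
  | a :: b :: l, l₂, _, h₂ => by
      rw [List.cons_append, cL_cons _ (by simp), cL_cons _ (by simp)]
      exact .trans (.conjCongr (.refl a) (cL_append (by simp) h₂))
        (.assoc a (cL (b :: l)) (cL l₂))

lemma cL_imp (a : Ty) : ∀ {l : List Ty}, l ≠ [] → (∀ p ∈ l, Prime' p) →
    TyEq (.imp a (cL l)) (cL (l.map (addPrem a)))
  | [], h, _ => absurd rfl h
  | [p], _, hp => (addPrem_eq (hp p (by simp)) a).symm
  | p :: q :: l, _, hp => by
      rw [cL_cons p (l := q :: l) (by simp), List.map_cons,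
        cL_cons (addPrem a p) (l := (q :: l).map (addPrem a)) (by simp)]
      exact .trans (.dist a p (cL (q :: l)))
        (.conjCongr ((addPrem_eq (hp p (by simp)) a).symm)
          (cL_imp a (l := q :: l) (by simp) (fun x hx => hp x (by simp [hx]))).symm.symm)

lemma PF_cL : ∀ (X : Ty) (l : List Ty), PF X = ↑l → TyEq X (cL l)
  | .tau, l, h => by
      have : ([Ty.tau] : Multiset Ty) = ↑l := by simpa [PF] using h
      exact cL_perm (Multiset.coe_eq_coe.mp this)
  | .imp a b, l, h => by
      obtain ⟨lb, hlb⟩ := Quotient.exists_rep (PF b)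
      have hlb' : PF b = ↑lb := hlb.symm
      have hne : lb ≠ [] := by
        intro hh; subst hh; exact PF_ne b (by simpa using hlb')
      have hmap : (↑(lb.map (addPrem a)) : Multiset Ty) = ↑l := by
        rw [← Multiset.map_coe, ← hlb']; simpa [PF] using h
      exact .trans (.impCongr (.refl a) (PF_cL b lb hlb'))
        (.trans (cL_imp a hne (fun p hp => PF_prime b p (by rw [hlb']; exact_mod_cast hp)))
          (cL_perm (Multiset.coe_eq_coe.mp hmap)))
  | .conj a b, l, h => by
      obtain ⟨la, hla⟩ := Quotient.exists_rep (PF a)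
      obtain ⟨lb, hlb⟩ := Quotient.exists_rep (PF b)
      have hla' : PF a = ↑la := hla.symm
      have hlb' : PF b = ↑lb := hlb.symm
      have hnea : la ≠ [] := by intro hh; subst hh; exact PF_ne a (by simpa using hla')
      have hneb : lb ≠ [] := by intro hh; subst hh; exact PF_ne b (by simpa using hlb')
      have happ : (↑(la ++ lb) : Multiset Ty) = ↑l := by
        rw [← Multiset.coe_add, ← hla', ← hlb']; simpa [PF] using h
      exact .trans (.conjCongr (PF_cL a la hla') (PF_cL b lb hlb'))
        (.trans (cL_append hnea hneb).symm (cL_perm (Multiset.coe_eq_coe.mp happ)))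

lemma rel_refl_mem {r : Ty → Ty → Prop} {s : Multiset Ty} (h : ∀ a ∈ s, r a a) :
    Multiset.Rel r s s := by
  induction s using Multiset.induction_on with
  | empty => exact .zero
  | cons a s ih =>
    exact .cons (h a (by simp)) (ih fun x hx => h x (by simp [hx]))

lemma sound {X Y : Ty} (h : TyEq X Y) : Multiset.Rel TyEq (PF X) (PF Y) := by
  induction h with
  | refl A => exact rel_refl_mem fun a _ => .refl a
  | @symm A B _ ih =>
    exact Multiset.rel_flip.mp (ih.mono fun a _ b _ hab => hab.symm)
  | trans _ _ ih₁ ih₂ => exact ih₁.trans TyEq ih₂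
  | @impCongr A A' B B' hA hB ihA ihB =>
    show Multiset.Rel _ ((PF B).map _) ((PF B').map _)
    rw [Multiset.rel_map]
    refine ihB.mono fun p hp q hq hpq => ?_
    exact .trans (addPrem_eq (PF_prime B p hp) A)
      (.trans (.impCongr hA hpq) (addPrem_eq (PF_prime B' q hq) A').symm)
  | conjCongr _ _ ih₁ ih₂ => exact ih₁.add ih₂
  | comm A B =>
    show Multiset.Rel _ (PF A + PF B) (PF B + PF A)
    rw [add_comm]; exact rel_refl_mem fun a _ => .refl a
  | assoc A B C =>
    show Multiset.Rel _ (PF A + (PF B + PF C)) (PF A + PF B + PF C)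
    rw [add_assoc]; exact rel_refl_mem fun a _ => .refl a
  | dist A B C =>
    show Multiset.Rel _ ((PF B + PF C).map _) ((PF B).map _ + (PF C).map _)
    rw [Multiset.map_add]; exact rel_refl_mem fun a _ => .refl a
  | curry A B C =>
    show Multiset.Rel _ ((PF C).map (addPrem (.conj A B)))
      (((PF C).map (addPrem B)).map (addPrem A))
    rw [Multiset.map_map, Multiset.rel_map]
    refine rel_refl_mem fun p hp => ?_
    have hp' := PF_prime C p hp
    exact .trans (addPrem_eq hp' (.conj A B))
      (.trans (.curry A B p)
        (.trans (.impCongr (.refl A) (addPrem_eq hp' B).symm)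
          (addPrem_eq (addPrem_prime hp' B) A).symm))

lemma map_split {f : Ty → Ty} {s₁ : Multiset Ty} :
    ∀ {s₂ u : Multiset Ty}, s₁ + s₂ = u.map f →
      ∃ u₁ u₂, u = u₁ + u₂ ∧ s₁ = u₁.map f ∧ s₂ = u₂.map f := by
  induction s₁ using Multiset.induction_on with
  | empty => exact fun {s₂ u} h => ⟨0, u, (zero_add u).symm, by simp, by simpa using h⟩
  | cons b s₁ ih =>
    intro s₂ u h
    have hb : b ∈ u.map f := by rw [← h]; simp
    obtain ⟨a, ha, hfa⟩ := Multiset.mem_map.mp hb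
    obtain ⟨u', rfl⟩ := Multiset.exists_cons_of_mem ha
    have h' : s₁ + s₂ = u'.map f := by
      have : b ::ₘ (s₁ + s₂) = b ::ₘ u'.map f := by
        rw [← Multiset.cons_add, h, Multiset.map_cons, hfa]
      exact (Multiset.cons_inj_right b).mp this
    obtain ⟨u₁, u₂, rfl, h₁, h₂⟩ := ih h'
    exact ⟨a ::ₘ u₁, u₂, by rw [Multiset.cons_add], by rw [Multiset.map_cons, hfa, h₁], h₂⟩

lemma rel_exists_list : ∀ {l₁ : List Ty} {t : Multiset Ty},
    Multiset.Rel TyEq (↑l₁) t → ∃ l₂ : List Ty, t = ↑l₂ ∧ List.Forall₂ TyEq l₁ l₂ := by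
  intro l₁
  induction l₁ with
  | nil =>
    intro t h
    exact ⟨[], by simpa using h, .nil⟩
  | cons a l ih =>
    intro t h
    rw [show ((a :: l : List Ty) : Multiset Ty) = a ::ₘ ↑l from rfl,
      Multiset.rel_cons_left] at h
    obtain ⟨b, t', hab, hrel, rfl⟩ := h
    obtain ⟨l₂, rfl, hf⟩ := ih hrel
    exact ⟨b :: l₂, by simp, .cons hab hf⟩
/-- Lemma 4 (imp vs conj). -/
theorem imp_conj (A B C₁ C₂ : Ty) (h : TyEq (.imp A B) (.conj C₁ C₂)) :
    ∃ B₁ B₂ : Ty, TyEq B (.conj B₁ B₂) ∧ TyEq C₁ (.imp A B₁) ∧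
      TyEq C₂ (.imp A B₂) := by
  have hrel := sound h
  simp only [PF] at hrel
  obtain ⟨s₁, s₂, h1, h2, hs⟩ := Multiset.rel_add_right.mp hrel
  obtain ⟨u₁, u₂, hu, hm1, hm2⟩ := map_split hs.symm
  obtain ⟨lu₁, hlu₁⟩ := Quotient.exists_rep u₁
  obtain ⟨lu₂, hlu₂⟩ := Quotient.exists_rep u₂
  have hlu₁' : u₁ = ↑lu₁ := hlu₁.symm
  have hlu₂' : u₂ = ↑lu₂ := hlu₂.symm
  have hu₁ne : lu₁ ≠ [] := by
    intro hh; subst hh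
    rw [hlu₁'] at hm1
    simp only [Multiset.coe_nil, Multiset.map_zero] at hm1
    subst hm1
    exact PF_ne C₁ (Multiset.rel_zero_left.mp h1)
  have hu₂ne : lu₂ ≠ [] := by
    intro hh; subst hh
    rw [hlu₂'] at hm2
    simp only [Multiset.coe_nil, Multiset.map_zero] at hm2
    subst hm2
    exact PF_ne C₂ (Multiset.rel_zero_left.mp h2)
  have hprime₁ : ∀ p ∈ lu₁, Prime' p := fun p hp =>
    PF_prime B p (by rw [hu, hlu₁']; exact Multiset.mem_add.mpr (Or.inl (by exact_mod_cast hp)))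
  have hprime₂ : ∀ p ∈ lu₂, Prime' p := fun p hp =>
    PF_prime B p (by rw [hu, hlu₂']; exact Multiset.mem_add.mpr (Or.inr (by exact_mod_cast hp)))
  refine ⟨cL lu₁, cL lu₂, ?_, ?_, ?_⟩
  · -- B ≡ B₁ ∧ B₂
    have hPFB : PF B = ↑(lu₁ ++ lu₂) := by
      rw [hu, hlu₁', hlu₂', Multiset.coe_add]
    exact .trans (PF_cL B _ hPFB) (cL_append hu₁ne hu₂ne)
  · -- C₁ ≡ A ⇒ B₁
    have hs₁ : s₁ = ↑(lu₁.map (addPrem A)) := by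
      rw [hm1, hlu₁', Multiset.map_coe]
    rw [hs₁] at h1
    obtain ⟨lc, hlc, hf⟩ := rel_exists_list h1
    exact .trans (PF_cL C₁ lc hlc)
      (.trans (cL_forall₂ hf).symm (cL_imp A hu₁ne hprime₁).symm)
  · -- C₂ ≡ A ⇒ B₂
    have hs₂ : s₂ = ↑(lu₂.map (addPrem A)) := by
      rw [hm2, hlu₂', Multiset.map_coe]
    rw [hs₂] at h2
    obtain ⟨lc, hlc, hf⟩ := rel_exists_list h2
    exact .trans (PF_cL C₂ lc hlc)
      (.trans (cL_forall₂ hf).symm (cL_imp A hu₂ne hprime₂).symm)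
end

section
/- Cancellation of implication premise: if A⇒B ≡ A⇒C, then B ≡ C. -/
/-!
Every type is isomorphic to a conjunction of primes `s ⇒ τ`, where `s` is a multiset of
primes (`s = ∅` giving `τ` itself). Normalising the premises recursively, the multiset
`normalFactors X` of normalised primes of `X` is a complete invariant of `≡`. The primes of
`A ⇒ B` are those of `B` with `normalFactors A` added to their premises, an operation undone
by subtracting `normalFactors A`; hence `A ⇒ B ≡ A ⇒ C` forces `B` and `C` to have the same
primes.
-/

instance : Trans TyEq TyEq TyEq := ⟨TyEq.trans⟩

namespace Ty

def factors : Ty → Multiset Ty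
  | tau => {tau}
  | imp a b => {imp a b}
  | conj a b => factors a + factors b

theorem factors_of_mem_factors {t x : Ty} (hx : x ∈ factors t) : factors x = {x} := by
  induction t with
  | conj a b iha ihb =>
    rcases Multiset.mem_add.mp hx with hx | hx
    exacts [iha hx, ihb hx]
  | _ => rw [factors, Multiset.mem_singleton] at hx; rw [hx]; rfl

def listConj : List Ty → Ty
  | [] => tau
  | [a] => a
  | a :: b :: l => conj a (listConj (b :: l))

theorem listConj_cons (a : Ty) {l : List Ty} (hl : l ≠ []) :
    listConj (a :: l) = conj a (listConj l) := by
  cases l with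
  | nil => exact absurd rfl hl
  | cons => rfl

theorem tyEq_listConj_of_perm {l l' : List Ty} (h : l.Perm l') :
    TyEq (listConj l) (listConj l') := by
  induction h with
  | nil => exact .refl _
  | @cons a l₁ l₂ h ih =>
    rcases eq_or_ne l₁ [] with rfl | h₁
    · rw [List.Perm.nil_eq h]; exact .refl _
    · have h₂ : l₂ ≠ [] := by rintro rfl; exact h₁ h.eq_nil
      rw [listConj_cons a h₁, listConj_cons a h₂]
      exact .conjCongr (.refl a) ih
  | swap a b l =>
    rcases eq_or_ne l [] with rfl | hl
    · exact .comm b a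
    · simp only [listConj_cons _ hl, listConj_cons _ (List.cons_ne_nil _ _)]
      calc TyEq (conj b (conj a (listConj l))) (conj (conj b a) (listConj l)) := .assoc ..
        TyEq _ (conj (conj a b) (listConj l)) := .conjCongr (.comm b a) (.refl _)
        TyEq _ (conj a (conj b (listConj l))) := .symm (.assoc ..)
  | trans _ _ ih₁ ih₂ => exact ih₁.trans ih₂

theorem tyEq_conj_listConj {l l' : List Ty} (hl : l ≠ []) (hl' : l' ≠ []) :
    TyEq (conj (listConj l) (listConj l')) (listConj (l ++ l')) := by
  induction l with
  | nil => exact absurd rfl hl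
  | cons a l ih =>
    rcases eq_or_ne l [] with rfl | h
    · rw [List.singleton_append, listConj_cons a hl']; exact .refl _
    · rw [List.cons_append, listConj_cons a h, listConj_cons a (by simp [h])]
      exact (TyEq.assoc ..).symm.trans (.conjCongr (.refl a) (ih h))

theorem tyEq_imp_listConj (x : Ty) {f : Ty → Ty} {l : List Ty} (hl : l ≠ [])
    (hf : ∀ p ∈ l, TyEq (imp x p) (f p)) :
    TyEq (imp x (listConj l)) (listConj (l.map f)) := by
  induction l with
  | nil => exact absurd rfl hl
  | cons a l ih =>
    rcases eq_or_ne l [] with rfl | h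
    · exact hf a List.mem_cons_self
    · rw [List.map_cons, listConj_cons a h, listConj_cons _ (by simpa using h)]
      exact (TyEq.dist ..).trans <| .conjCongr (hf a List.mem_cons_self)
        (ih h fun p hp => hf p (List.mem_cons_of_mem a hp))

theorem factors_listConj {l : List Ty} (hl : l ≠ []) (h : ∀ x ∈ l, factors x = {x}) :
    factors (listConj l) = l := by
  induction l with
  | nil => exact absurd rfl hl
  | cons a l ih =>
    rcases eq_or_ne l [] with rfl | hl'
    · exact h a List.mem_cons_self
    · rw [listConj_cons a hl', factors, h a List.mem_cons_self,
        ih hl' fun x hx => h x (List.mem_cons_of_mem a hx)]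
      rfl

/-- Equal multisets give syntactically equal types, so this is a canonical representative. -/
noncomputable def multisetConj (m : Multiset Ty) : Ty := listConj m.toList

theorem tyEq_listConj_multisetConj (l : List Ty) : TyEq (listConj l) (multisetConj l) :=
  tyEq_listConj_of_perm (Multiset.coe_eq_coe.mp (Multiset.coe_toList _)).symm

theorem tyEq_conj_multisetConj {m n : Multiset Ty} (hm : m ≠ 0) (hn : n ≠ 0) :
    TyEq (conj (multisetConj m) (multisetConj n)) (multisetConj (m + n)) := by
  have h := tyEq_listConj_multisetConj (m.toList ++ n.toList)
  rw [← Multiset.coe_add, Multiset.coe_toList, Multiset.coe_toList] at h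
  exact (tyEq_conj_listConj (Multiset.toList_eq_nil.not.mpr hm)
    (Multiset.toList_eq_nil.not.mpr hn)).trans h

theorem tyEq_imp_multisetConj (x : Ty) {f : Ty → Ty} {m : Multiset Ty} (hm : m ≠ 0)
    (hf : ∀ p ∈ m, TyEq (imp x p) (f p)) :
    TyEq (imp x (multisetConj m)) (multisetConj (m.map f)) := by
  have h := tyEq_listConj_multisetConj (m.toList.map f)
  rw [← Multiset.map_coe, Multiset.coe_toList] at h
  exact (tyEq_imp_listConj x (Multiset.toList_eq_nil.not.mpr hm)
    fun p hp => hf p (Multiset.mem_toList.mp hp)).trans h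

theorem factors_multisetConj {m : Multiset Ty} (hm : m ≠ 0)
    (h : ∀ x ∈ m, factors x = {x}) : factors (multisetConj m) = m := by
  rw [multisetConj, factors_listConj (Multiset.toList_eq_nil.not.mpr hm)
    fun x hx => h x (Multiset.mem_toList.mp hx), Multiset.coe_toList]

def premises : Ty → Multiset Ty
  | imp c _ => factors c
  | _ => 0

theorem factors_of_mem_premises {p x : Ty} (hx : x ∈ premises p) : factors x = {x} := by
  cases p with
  | imp c _ => exact factors_of_mem_factors hx
  | _ => simp [premises] at hx

noncomputable def ofPremises (s : Multiset Ty) : Ty :=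
  if s = 0 then tau else imp (multisetConj s) tau

theorem factors_ofPremises (s : Multiset Ty) : factors (ofPremises s) = {ofPremises s} := by
  unfold ofPremises; split_ifs <;> rfl

theorem premises_ofPremises {s : Multiset Ty} (h : ∀ x ∈ s, factors x = {x}) :
    premises (ofPremises s) = s := by
  unfold ofPremises
  split_ifs with hs
  · exact hs.symm
  · exact factors_multisetConj hs h

theorem tyEq_imp_ofPremises {m : Multiset Ty} (hm : m ≠ 0) (s : Multiset Ty) :
    TyEq (imp (multisetConj m) (ofPremises s)) (ofPremises (m + s)) := by
  have hms : m + s ≠ 0 := by simp [hm]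
  by_cases hs : s = 0
  · rw [hs, add_zero, ofPremises, ofPremises, if_pos rfl, if_neg hm]; exact .refl _
  · rw [ofPremises, ofPremises, if_neg hs, if_neg hms]
    exact (TyEq.curry ..).symm.trans (.impCongr (tyEq_conj_multisetConj hm hs) (.refl _))

noncomputable def addPremises (m : Multiset Ty) (p : Ty) : Ty := ofPremises (m + premises p)

noncomputable def normalFactors : Ty → Multiset Ty
  | tau => {tau}
  | imp a b => (normalFactors b).map (addPremises (normalFactors a))
  | conj a b => normalFactors a + normalFactors b

theorem normalFactors_ne_zero (t : Ty) : normalFactors t ≠ 0 := by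
  induction t <;> simp [normalFactors, *]

-- `ofPremises (premises p) = p` expresses that `p` is a normalised prime.
theorem ofPremises_premises_of_mem_normalFactors {t p : Ty} (hp : p ∈ normalFactors t) :
    ofPremises (premises p) = p := by
  induction t generalizing p with
  | tau =>
    rw [normalFactors, Multiset.mem_singleton] at hp
    subst hp; rfl
  | imp a b iha _ =>
    obtain ⟨q, -, rfl⟩ := Multiset.mem_map.mp hp
    rw [addPremises, premises_ofPremises]
    intro x hx
    rcases Multiset.mem_add.mp hx with hx | hx
    · rw [← iha hx, factors_ofPremises]
    · exact factors_of_mem_premises hx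
  | conj a b iha ihb =>
    rcases Multiset.mem_add.mp hp with hp | hp
    exacts [iha hp, ihb hp]

theorem factors_of_mem_normalFactors {t p : Ty} (hp : p ∈ normalFactors t) :
    factors p = {p} := by
  rw [← ofPremises_premises_of_mem_normalFactors hp, factors_ofPremises]

theorem addPremises_add (m : Multiset Ty) {n : Multiset Ty} (hn : ∀ x ∈ n, factors x = {x})
    (p : Ty) : addPremises (m + n) p = addPremises m (addPremises n p) := by
  rw [addPremises, addPremises, addPremises, premises_ofPremises, add_assoc]
  intro x hx
  rcases Multiset.mem_add.mp hx with hx | hx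
  exacts [hn x hx, factors_of_mem_premises hx]

theorem normalFactors_eq_of_tyEq {x y : Ty} (h : TyEq x y) : normalFactors x = normalFactors y := by
  induction h with
  | refl => rfl
  | symm _ ih => exact ih.symm
  | trans _ _ ih₁ ih₂ => exact ih₁.trans ih₂
  | impCongr _ _ ih₁ ih₂ => rw [normalFactors, normalFactors, ih₁, ih₂]
  | conjCongr _ _ ih₁ ih₂ => rw [normalFactors, normalFactors, ih₁, ih₂]
  | comm => exact add_comm _ _
  | assoc => exact (add_assoc _ _ _).symm
  | dist => exact Multiset.map_add _ _ _
  | curry =>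
    simp only [normalFactors, Multiset.map_map, Function.comp_def,
      addPremises_add _ fun _ => factors_of_mem_normalFactors]

theorem tyEq_multisetConj_normalFactors (t : Ty) : TyEq t (multisetConj (normalFactors t)) := by
  induction t with
  | tau => rw [normalFactors, multisetConj, Multiset.toList_singleton]; exact .refl _
  | imp a b iha ihb =>
    refine (TyEq.impCongr iha ihb).trans <|
      tyEq_imp_multisetConj _ (normalFactors_ne_zero b) fun p hp => ?_
    have h := tyEq_imp_ofPremises (normalFactors_ne_zero a) (premises p)
    rwa [ofPremises_premises_of_mem_normalFactors hp] at h
  | conj a b iha ihb =>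
    exact (TyEq.conjCongr iha ihb).trans
      (tyEq_conj_multisetConj (normalFactors_ne_zero a) (normalFactors_ne_zero b))

theorem tyEq_iff_normalFactors_eq {x y : Ty} : TyEq x y ↔ normalFactors x = normalFactors y := by
  refine ⟨normalFactors_eq_of_tyEq, fun h => ?_⟩
  refine (tyEq_multisetConj_normalFactors x).trans ?_
  rw [h]
  exact (tyEq_multisetConj_normalFactors y).symm

noncomputable def removePremises (m : Multiset Ty) (p : Ty) : Ty := ofPremises (premises p - m)

theorem removePremises_addPremises {m : Multiset Ty} (hm : ∀ x ∈ m, factors x = {x})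
    {p : Ty} (hp : ofPremises (premises p) = p) : removePremises m (addPremises m p) = p := by
  rw [removePremises, addPremises, premises_ofPremises, add_tsub_cancel_left, hp]
  intro x hx
  rcases Multiset.mem_add.mp hx with hx | hx
  exacts [hm x hx, factors_of_mem_premises hx]

theorem eq_of_map_addPremises_eq {m s t : Multiset Ty} (hm : ∀ x ∈ m, factors x = {x})
    (hs : ∀ p ∈ s, ofPremises (premises p) = p) (ht : ∀ p ∈ t, ofPremises (premises p) = p)
    (h : s.map (addPremises m) = t.map (addPremises m)) : s = t := by
  have cancel : ∀ u : Multiset Ty, (∀ p ∈ u, ofPremises (premises p) = p) →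
      (u.map (addPremises m)).map (removePremises m) = u := fun u hu => by
    rw [Multiset.map_map]
    exact (Multiset.map_congr rfl fun p hp => removePremises_addPremises hm (hu p hp)).trans
      (Multiset.map_id u)
  rw [← cancel s hs, h, cancel t ht]

end Ty

/-- Lemma 8: cancellation of implication premise. -/
theorem imp_cancel (A B C : Ty) (h : TyEq (.imp A B) (.imp A C)) :
    TyEq B C := by
  rw [Ty.tyEq_iff_normalFactors_eq] at h ⊢
  exact Ty.eq_of_map_addPremises_eq (fun _ => Ty.factors_of_mem_normalFactors)
    (fun _ => Ty.ofPremises_premises_of_mem_normalFactors)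
    (fun _ => Ty.ofPremises_premises_of_mem_normalFactors) h
end
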